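/- If K(x) is a continuous function on ℝ satisfying limsup_{x→+∞} |K(x)|·√x < 1 (in particular |K(x)| < x^{−1/2} for all sufficiently large x > 0), then the solution of the scalar ODE ẋ = −x + (K(x)+1)² x² with initial condition x(0) = 4 blows up or is unbounded; in particular, there is no continuous feedback K rendering ẋ = −x + (K(x)+u)²x² ISS. -/

import Mathlib

/-!
At the level `4` the vector field is positive, so the trajectory from `x(0) = 4` never drops
below `4`; on `[4, ∞)` the smallness of `K` keeps the vector field positive. A trajectory bounded
by `B` would therefore stay in `[4, B]`, where the continuous vector field is at least some
`c > 0`, forcing `x(t) ≥ 4 + c t`.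
-/

open Set

theorem neg_add_sq_mul_sq_pos {k y : ℝ} (hy : 4 ≤ y) (hk : |k| * √y < 1) :
    0 < -y + (k + 1) ^ 2 * y ^ 2 := by
  have hs : 2 ≤ √y := by
    rw [show (2 : ℝ) = √(2 ^ 2) by simp]
    exact Real.sqrt_le_sqrt (by linarith)
  have hsq : √y ^ 2 = y := Real.sq_sqrt (by linarith)
  have hk1 : 1 < (k + 1) * √y := by nlinarith [neg_abs_le k]
  have hky : 1 < (k + 1) ^ 2 * y := by nlinarith
  nlinarith

theorem forall_le_of_hasDerivAt_comp_of_pos {x g : ℝ → ℝ} {a : ℝ}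
    (hx : ∀ t, 0 ≤ t → HasDerivAt x (g (x t)) t) (ha : 0 < g a) (h0 : a ≤ x 0) :
    ∀ t, 0 ≤ t → a ≤ x t := by
  intro t ht
  have := image_le_of_deriv_right_lt_deriv_boundary (f := fun s => -x s) (f' := fun s => -g (x s))
    (a := 0) (b := t) (B := fun _ => -a) (B' := fun _ => 0)
    (fun s hs => (hx s hs.1).continuousAt.neg.continuousWithinAt)
    (fun s hs => (hx s hs.1).neg.hasDerivWithinAt) (neg_le_neg h0)
    (fun _ => hasDerivAt_const _ _)
    (fun s _ hs => by simpa [neg_inj.mp hs] using ha) (right_mem_Icc.mpr ht)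
  exact neg_le_neg_iff.mp this

theorem exists_lt_of_hasDerivAt_comp_of_pos {x g : ℝ → ℝ} {a : ℝ} (hg : ContinuousOn g (Ici a))
    (hpos : ∀ y, a ≤ y → 0 < g y) (hx : ∀ t, 0 ≤ t → HasDerivAt x (g (x t)) t)
    (h0 : a ≤ x 0) (B : ℝ) : ∃ t, 0 ≤ t ∧ B < x t := by
  by_contra! hB
  have hxa := forall_le_of_hasDerivAt_comp_of_pos hx (hpos a le_rfl) h0
  obtain ⟨y₀, hy₀, hmin⟩ := isCompact_Icc.exists_isMinOn (nonempty_Icc.mpr (h0.trans (hB 0 le_rfl)))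
    (hg.mono Icc_subset_Ici_self)
  set c := g y₀
  have hlin : ∀ t, 0 ≤ t → c * (t - 0) ≤ x t - x 0 := by
    refine fun t ht => (convex_Ici 0).mul_sub_le_image_sub_of_le_deriv
      (fun s hs => (hx s hs).continuousAt.continuousWithinAt)
      (fun s hs => (hx s (interior_subset hs)).differentiableAt.differentiableWithinAt)
      (fun s hs => ?_) 0 self_mem_Ici t ht ht
    have hs : 0 ≤ s := interior_subset hs
    rw [(hx s hs).deriv]
    exact hmin ⟨hxa s hs, hB s hs⟩
  have hc : 0 < c := hpos y₀ hy₀.1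
  set T := (B - x 0) / c + 1
  have hT : 0 ≤ T := by
    have := hB 0 le_rfl
    positivity
  have hcT : c * T = B - x 0 + c := by
    rw [mul_add, mul_div_cancel₀ _ hc.ne', mul_one]
  linarith [hlin T hT, hB T hT]

theorem no_bounded_solution_counterexample_general
    (K : ℝ → ℝ) (hK : Continuous K)
    (hKsmall : ∀ x : ℝ, 4 ≤ x → |K x| * Real.sqrt x < 1) :
    ¬ ∃ x : ℝ → ℝ,
        (∀ t, 0 ≤ t → HasDerivAt x (-(x t) + (K (x t) + 1) ^ 2 * (x t) ^ 2) t) ∧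
        x 0 = 4 ∧ ∃ B : ℝ, ∀ t, 0 ≤ t → |x t| ≤ B := by
  rintro ⟨x, hx, hx0, B, hB⟩
  have hg : Continuous fun y => -y + (K y + 1) ^ 2 * y ^ 2 := by fun_prop
  obtain ⟨t, ht, hBt⟩ := exists_lt_of_hasDerivAt_comp_of_pos hg.continuousOn
    (fun y hy => neg_add_sq_mul_sq_pos hy (hKsmall y hy)) hx hx0.ge B
  linarith [le_abs_self (x t), hB t ht]

/-- If `K` is continuous with `limsup_{x→∞} |K x| √x < 1`, in particular with
`|K x| < x^{-1/2}` for all `x ≥ 4` (covering the whole journey of the trajectory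
starting at `4`), then the closed-loop system `ẋ = −x + (K(x)+1)² x²`
(constant actuator error `u ≡ 1`) has no bounded global solution from `x(0) = 4`:
such a continuous feedback `K` cannot render `ẋ = −x + (K(x)+u)² x²` ISS. -/
theorem no_bounded_solution_counterexample
    (K : ℝ → ℝ) (hK : Continuous K)
    (hlimsup : Filter.limsup (fun x => |K x| * Real.sqrt x) Filter.atTop < 1)
    (hKsmall : ∀ x : ℝ, 4 ≤ x → |K x| * Real.sqrt x < 1) :
    ¬ ∃ x : ℝ → ℝ,
        (∀ t, 0 ≤ t → HasDerivAt x (-(x t) + (K (x t) + 1) ^ 2 * (x t) ^ 2) t) ∧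
        x 0 = 4 ∧ ∃ B : ℝ, ∀ t, 0 ≤ t → |x t| ≤ B :=
  no_bounded_solution_counterexample_general K hK hKsmall
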